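/- Let A be a commutative ring with unit and P ∈ A[y] a monic polynomial of degree d > 0. Let e > 0 be a divisor of d which is invertible in A. Then there exists a unique monic polynomial Q ∈ A[y] of degree d/e such that the degree of P - Q^e is strictly less than d - d/e. -/

import Mathlib

/-!
With `S = ∑_{i<e} Q'^i Q^(e-1-i)` we have `Q'^e - Q^e = (Q' - Q) S`, and for monic `Q, Q'` of
degree `m` the polynomial `S` has degree at most `(e-1)m` with coefficient `e` there. As `e` is
invertible, `deg (Q'^e - Q^e) = deg (Q' - Q) + (e-1)m`, which forces uniqueness since
`d - d/e = (e-1)m`. For existence start from `X^m` and kill the coefficients of `P - Q^e` from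
degree `d - 1` down to `(e-1)m`: replacing `Q` by `Q + (c/e) X^j` changes `Q^e` by
`c X^(j + (e-1)m)` plus terms of lower degree.
-/

open Polynomial Finset

namespace Polynomial

variable {A : Type*} [CommRing A]

theorem degree_sub_lt_of_coeff_eq {p q : A[X]} {n : ℕ} (hp : p.degree ≤ n) (hq : q.degree ≤ n)
    (h : p.coeff n = q.coeff n) : (p - q).degree < n := by
  rw [degree_lt_iff_coeff_zero]
  intro k hk
  rw [coeff_sub, sub_eq_zero]
  rcases hk.eq_or_lt with rfl | hlt
  · exact h
  · rw [coeff_eq_zero_of_degree_lt (hp.trans_lt (WithBot.coe_lt_coe.2 hlt)),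
      coeff_eq_zero_of_degree_lt (hq.trans_lt (WithBot.coe_lt_coe.2 hlt))]

section GeomSum

variable {Q Q' : A[X]} {e m : ℕ}

theorem natDegree_geom_sum₂_le (hQ : Q.natDegree ≤ m) (hQ' : Q'.natDegree ≤ m) :
    (∑ i ∈ range e, Q' ^ i * Q ^ (e - 1 - i)).natDegree ≤ (e - 1) * m := by
  refine natDegree_sum_le_of_forall_le _ _ fun i hi => ?_
  have hi : i + (e - 1 - i) = e - 1 := by have := mem_range.1 hi; omega
  calc (Q' ^ i * Q ^ (e - 1 - i)).natDegree ≤ i * m + (e - 1 - i) * m :=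
        natDegree_mul_le_of_le (natDegree_pow_le_of_le i hQ') (natDegree_pow_le_of_le _ hQ)
    _ = (e - 1) * m := by rw [← add_mul, hi]

theorem coeff_geom_sum₂_of_natDegree_le (hQ : Q.natDegree ≤ m) (hQ' : Q'.natDegree ≤ m) :
    (∑ i ∈ range e, Q' ^ i * Q ^ (e - 1 - i)).coeff ((e - 1) * m) =
      ∑ i ∈ range e, Q'.coeff m ^ i * Q.coeff m ^ (e - 1 - i) := by
  rw [finsetSum_coeff]
  refine sum_congr rfl fun i hi => ?_
  have hi : (e - 1) * m = i * m + (e - 1 - i) * m := by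
    rw [← add_mul]; congr 1; have := mem_range.1 hi; omega
  rw [hi, coeff_mul_add_eq_of_natDegree_le (natDegree_pow_le_of_le i hQ')
    (natDegree_pow_le_of_le _ hQ), coeff_pow_of_natDegree_le hQ', coeff_pow_of_natDegree_le hQ]

theorem coeff_geom_sum₂_of_monic (hQ : Q.Monic) (hQ' : Q'.Monic) (hdQ : Q.natDegree = m)
    (hdQ' : Q'.natDegree = m) :
    (∑ i ∈ range e, Q' ^ i * Q ^ (e - 1 - i)).coeff ((e - 1) * m) = e := by
  have h1 : Q.coeff m = 1 := hdQ ▸ hQ.coeff_natDegree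
  have h1' : Q'.coeff m = 1 := hdQ' ▸ hQ'.coeff_natDegree
  simp [coeff_geom_sum₂_of_natDegree_le hdQ.le hdQ'.le, h1, h1']

theorem degree_pow_sub_pow_of_monic (hQ : Q.Monic) (hQ' : Q'.Monic) (hdQ : Q.natDegree = m)
    (hdQ' : Q'.natDegree = m) (he : (e : A) ∈ nonZeroDivisors A) :
    (Q' ^ e - Q ^ e).degree = (Q' - Q).degree + ((e - 1) * m : ℕ) := by
  rcases eq_or_ne Q' Q with rfl | hne
  · simp
  have : Nontrivial A := Nontrivial.of_polynomial_ne hne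
  set S := ∑ i ∈ range e, Q' ^ i * Q ^ (e - 1 - i)
  have hSe : S.coeff ((e - 1) * m) = e := coeff_geom_sum₂_of_monic hQ hQ' hdQ hdQ'
  have hSdeg : S.degree = ↑((e - 1) * m) := degree_eq_of_le_of_coeff_ne_zero
    (degree_le_of_natDegree_le (natDegree_geom_sum₂_le hdQ.le hdQ'.le))
    (hSe ▸ nonZeroDivisors.ne_zero he)
  have hSlc : S.leadingCoeff = e := by
    rw [leadingCoeff, natDegree_eq_of_degree_eq_some hSdeg, hSe]
  have hlc : (Q' - Q).leadingCoeff * S.leadingCoeff ≠ 0 := by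
    rw [hSlc, Ne, mul_right_mem_nonZeroDivisors_eq_zero_iff he, leadingCoeff_eq_zero]
    exact sub_ne_zero.2 hne
  rw [← geom_sum₂_mul, mul_comm, degree_mul' hlc, hSdeg]

end GeomSum

section ApproximateRoot

variable {P Q : A[X]} {e m : ℕ}

theorem exists_monic_degree_sub_pow_lt_of_le (hQ : Q.Monic) (hdQ : Q.natDegree = m)
    (he : IsUnit (e : A)) {j : ℕ} (hj : j < m) (hPQ : (P - Q ^ e).degree ≤ ↑((e - 1) * m + j)) :
    ∃ Q' : A[X], Q'.Monic ∧ Q'.natDegree = m ∧ (P - Q' ^ e).degree < ↑((e - 1) * m + j) := by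
  obtain ⟨u, hu⟩ := he
  set c := (P - Q ^ e).coeff ((e - 1) * m + j)
  set R := C (c * ↑u⁻¹) * X ^ j
  have hR : R.degree < Q.degree :=
    degree_lt_degree ((natDegree_C_mul_X_pow_le _ _).trans_lt (hdQ ▸ hj))
  have hQR : (Q + R).natDegree = m := (natDegree_add_eq_left_of_degree_lt hR).trans hdQ
  set S := ∑ i ∈ range e, (Q + R) ^ i * Q ^ (e - 1 - i)
  have hSR : (Q + R) ^ e - Q ^ e = (C (c * ↑u⁻¹) * S) * X ^ j := by
    rw [← geom_sum₂_mul, add_sub_cancel_left]; ring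
  refine ⟨Q + R, hQ.add_of_left hR, hQR, ?_⟩
  rw [show P - (Q + R) ^ e = (P - Q ^ e) - ((Q + R) ^ e - Q ^ e) by ring]
  refine degree_sub_lt_of_coeff_eq hPQ ?_ ?_
  · rw [hSR]
    exact degree_le_of_natDegree_le (natDegree_mul_le_of_le
      ((natDegree_C_mul_le _ _).trans (natDegree_geom_sum₂_le hdQ.le hQR.le))
      (natDegree_X_pow_le j))
  · rw [hSR, coeff_mul_X_pow, coeff_C_mul,
      coeff_geom_sum₂_of_monic hQ (hQ.add_of_left hR) hdQ hQR, ← hu, Units.inv_mul_cancel_right]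

theorem exists_monic_degree_sub_pow_lt [Nontrivial A] (hP : P.Monic) (hdP : P.natDegree = e * m)
    (he : 0 < e) (hu : IsUnit (e : A)) :
    ∃ Q : A[X], Q.Monic ∧ Q.natDegree = m ∧ (P - Q ^ e).degree < ↑((e - 1) * m) := by
  suffices ∀ i ≤ m, ∃ Q : A[X], Q.Monic ∧ Q.natDegree = m ∧
      (P - Q ^ e).degree < ↑((e - 1) * m + (m - i)) by
    simpa using this m le_rfl
  intro i
  induction i with
  | zero =>
    intro _
    have hXe : (X ^ m) ^ e = (X : A[X]) ^ (e * m) := by rw [← pow_mul, mul_comm]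
    have hem : (e - 1) * m + (m - 0) = e * m := by
      rw [Nat.sub_zero, Nat.sub_one_mul, Nat.sub_add_cancel (Nat.le_mul_of_pos_left m he)]
    refine ⟨X ^ m, monic_X_pow m, natDegree_X_pow m, ?_⟩
    rw [hXe, hem]
    refine degree_sub_lt_of_coeff_eq (hdP ▸ degree_le_natDegree) (degree_X_pow_le _) ?_
    rw [coeff_X_pow_self, ← hdP, hP.coeff_natDegree]
  | succ i ih =>
    intro hi
    obtain ⟨Q, hQ, hdQ, hPQ⟩ := ih (by omega)
    have hmi : m - i = m - (i + 1) + 1 := by omega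
    rw [hmi, ← add_assoc] at hPQ
    exact exists_monic_degree_sub_pow_lt_of_le hQ hdQ hu (by omega) (Order.le_of_lt_succ hPQ)

theorem eq_of_monic_degree_sub_pow_lt {Q' : A[X]} (hQ : Q.Monic) (hQ' : Q'.Monic)
    (hdQ : Q.natDegree = m) (hdQ' : Q'.natDegree = m) (he : (e : A) ∈ nonZeroDivisors A)
    (hPQ : (P - Q ^ e).degree < ↑((e - 1) * m)) (hPQ' : (P - Q' ^ e).degree < ↑((e - 1) * m)) :
    Q' = Q := by
  have hlt : (Q' ^ e - Q ^ e).degree < ↑((e - 1) * m) := by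
    rw [show Q' ^ e - Q ^ e = (P - Q ^ e) - (P - Q' ^ e) by ring]
    exact (degree_sub_le _ _).trans_lt (max_lt hPQ hPQ')
  rw [degree_pow_sub_pow_of_monic hQ hQ' hdQ hdQ' he] at hlt
  by_contra hne
  rw [degree_eq_natDegree (sub_ne_zero.2 hne)] at hlt
  norm_cast at hlt
  omega

end ApproximateRoot

end Polynomial

/-- **Approximate roots** (statement 0).
Let `A` be a commutative ring with unit and `P ∈ A[y]` a monic polynomial of degree
`d > 0`.  Let `e > 0` be a divisor of `d` which is invertible in `A`.  Then there exists
a unique monic polynomial `Q ∈ A[y]` of degree `d / e` such that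
`deg (P - Q ^ e) < d - d / e`.  `Q` is the `e`-th approximate root of `P`. -/
theorem stmt0 {A : Type*} [CommRing A] (P : Polynomial A) (d e : ℕ)
    (hd : 0 < d) (hP : P.Monic) (hdeg : P.natDegree = d)
    (he : 0 < e) (hdvd : e ∣ d) (hunit : IsUnit (e : A)) :
    ∃! Q : Polynomial A, Q.Monic ∧ Q.natDegree = d / e ∧
      (P - Q ^ e).degree < ((d - d / e : ℕ) : WithBot ℕ) := by
  obtain ⟨m, rfl⟩ := hdvd
  rw [Nat.mul_div_cancel_left m he, ← Nat.sub_one_mul]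
  have : Nontrivial A := Nontrivial.of_polynomial_ne (p := P) (q := 0) fun h => by
    rw [h, natDegree_zero] at hdeg
    omega
  obtain ⟨Q, hQ, hdQ, hPQ⟩ := exists_monic_degree_sub_pow_lt hP hdeg he hunit
  exact ⟨Q, ⟨hQ, hdQ, hPQ⟩, fun Q' ⟨hQ', hdQ', hPQ'⟩ =>
    eq_of_monic_degree_sub_pow_lt hQ hQ' hdQ hdQ' hunit.mem_nonZeroDivisors hPQ hPQ'⟩
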